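/- arXiv:1202.5154 — 3 statements merged into one kernel-verified Lean document; each statement's English description precedes it below -/
import Mathlib

section
/- Every nonempty C∞-word w has exactly two primitives if w begins and ends with 1, exactly eight primitives if w begins and ends with 2, and exactly four primitives otherwise. -/
namespace CInfWords

open scoped Classical

/-- Run-length encoding Δ of a word. -/
def rle : List ℕ → List ℕ
  | [] => []
  | [_] => [1]
  | a :: b :: l =>
    if a = b then
      match rle (b :: l) with
      | [] => [1]
      | c :: r => (c + 1) :: r
    else 1 :: rle (b :: l)

/-- Erase a leading `1`, if any. -/
def trim1 : List ℕ → List ℕ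
  | 1 :: l => l
  | l => l

/-- The derivative `D`: the run-length encoding with the first and/or the last
symbol erased when they are equal to `1`. -/
def D (w : List ℕ) : List ℕ := trim1 ((trim1 (rle w).reverse).reverse)

/-- Words over Σ = {1,2}. -/
def IsWord (w : List ℕ) : Prop := ∀ x ∈ w, x = 1 ∨ x = 2

/-- Words over Σ₀ = {0,1,2}. -/
def IsWord0 (w : List ℕ) : Prop := ∀ x ∈ w, x = 0 ∨ x = 1 ∨ x = 2

/-- Σ₀^{++}: words over Σ₀ that are empty or begin with a nonzero symbol. -/
def Spp (w : List ℕ) : Prop := IsWord0 w ∧ (w = [] ∨ w.headI ≠ 0)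

/-- C^∞-words: every iterated derivative is a word over Σ = {1,2}. -/
def Cinf (w : List ℕ) : Prop := ∀ k, IsWord (D^[k] w)

/-- The height of a C^∞-word: the least k with D^[k] w = ε. -/
noncomputable def height (w : List ℕ) : ℕ := sInf {k | D^[k] w = []}

/-- The root of a C^∞-word of height k > 0: its (k-1)-st derivative. -/
noncomputable def root (w : List ℕ) : List ℕ := D^[height w - 1] w

/-- `v` is a primitive of `w`. -/
def Primitive (v w : List ℕ) : Prop := IsWord v ∧ D v = w

/-- The complement: swap 1's and 2's. -/
def compl (w : List ℕ) : List ℕ := w.map (fun x => 3 - x)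

/-- Minimal C^∞-words: every derivative is a shortest primitive of the next one. -/
def Minimal (w : List ℕ) : Prop :=
  Cinf w ∧ 0 < height w ∧
    ∀ j, j + 2 ≤ height w → ∀ v, Primitive v (D^[j+1] w) → (D^[j] w).length ≤ v.length

/-- Maximal C^∞-words: every derivative is a longest primitive of the next one. -/
def Maximal (w : List ℕ) : Prop :=
  Cinf w ∧ 0 < height w ∧
    ∀ j, j + 2 ≤ height w → ∀ v, Primitive v (D^[j+1] w) → v.length ≤ (D^[j] w).length

def LeftMinimal (w : List ℕ) : Prop := ∃ v, Minimal v ∧ w <+: v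
def RightMinimal (w : List ℕ) : Prop := ∃ v, Minimal v ∧ w <:+ v
def LeftMaximal (w : List ℕ) : Prop := ∃ v, Maximal v ∧ w <+: v
def RightMaximal (w : List ℕ) : Prop := ∃ v, Maximal v ∧ w <:+ v

/-- Single-rooted minimal words. -/
def SRMin (w : List ℕ) : Prop := Minimal w ∧ (root w).length = 1

/-- Double-rooted minimal words. -/
def DRMin (w : List ℕ) : Prop := Minimal w ∧ (root w).length = 2

/-- The left frontier Ψ(w). -/
noncomputable def psi (w : List ℕ) : List ℕ :=
  (List.range (height w)).map fun i =>
    if i = 0 then w.getD 0 0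
    else if (D^[i] w).getD 0 0 = 2 ∧ (D^[i-1] w).getD 0 0 ≠ (D^[i-1] w).getD 1 0
      then 0
    else (D^[i] w).getD 0 0

/-- The single-rooted minimal word with left frontier U (if it exists). -/
noncomputable def srmOf (U : List ℕ) : List ℕ :=
  if h : ∃ w, SRMin w ∧ psi w = U then h.choose else []

/-- The double-rooted minimal word with left frontier U (if it exists). -/
noncomputable def drmOf (U : List ℕ) : List ℕ :=
  if h : ∃ w, DRMin w ∧ psi w = U then h.choose else []

/-- Γs: the right frontier of the single-rooted minimal word with left frontier U. -/
noncomputable def Gs (U : List ℕ) : List ℕ := psi (srmOf U).reverse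

/-- Γd: the right frontier of the double-rooted minimal word with left frontier U. -/
noncomputable def Gd (U : List ℕ) : List ℕ := psi (drmOf U).reverse

/-- Θ = Γs ∘ Γd. -/
noncomputable def Th (U : List ℕ) : List ℕ := Gs (Gd U)

/-- Π = Γd ∘ Γs. -/
noncomputable def Pp (U : List ℕ) : List ℕ := Gd (Gs U)

/-- One step in the graph G: from node U, the edge labeled 1 goes to U·1, the edge
labeled 2 goes to U·2, and the edge labeled 0 goes to Θ(U)·2. -/
noncomputable def step (U : List ℕ) (a : ℕ) : List ℕ :=
  if a = 1 then U ++ [1] else if a = 2 then U ++ [2] else Th U ++ [2]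

/-- The endpoint of the path in G starting at the origin ε and labeled by W. -/
noncomputable def pathEnd (W : List ℕ) : List ℕ := W.foldl step []

/-- W ∈ Σ₀^{++} labels a directed path in G from ε to U. -/
def LabelsPath (W U : List ℕ) : Prop := Spp W ∧ pathEnd W = U

/-- ‖U‖: the number of words in Σ₀^{++} labeling a path in G from ε to U. -/
noncomputable def normG (U : List ℕ) : ℕ := {W | LabelsPath W U}.ncard

/-- |U|: the length of the single-rooted minimal word with left frontier U. -/
noncomputable def len (U : List ℕ) : ℕ := (srmOf U).length

/-- u is the minimal part of w: the first (leftmost-occurring) factor of w that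
is a single-rooted minimal word of the same height as w. -/
def IsMinPart (u w : List ℕ) : Prop :=
  ∃ s t, w = s ++ u ++ t ∧ SRMin u ∧ height u = height w ∧
    ∀ u' s' t', w = s' ++ u' ++ t' → SRMin u' → height u' = height w →
      s.length ≤ s'.length

/-! A primitive `v` of `w` is determined by its first letter (two choices) and by `Δ(v)`,
which is `w` with a `1` possibly added at either end. The added `1` may be left out at the
front only if `w` begins with `2` (else `D` would erase the first letter of `w` itself), and
likewise at the back, so there are `2 · (1 or 2) · (1 or 2)` primitives. -/

def ofRuns (a : ℕ) : List ℕ → List ℕ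
  | [] => []
  | c :: r => List.replicate c a ++ ofRuns (3 - a) r

lemma isWord_ofRuns {a : ℕ} (ha : a = 1 ∨ a = 2) (r : List ℕ) : IsWord (ofRuns a r) := by
  induction r generalizing a with
  | nil => simp [ofRuns, IsWord]
  | cons c r ih =>
    intro x hx
    rcases List.mem_append.1 hx with hx | hx
    · rw [List.eq_of_mem_replicate hx]; exact ha
    · exact ih (by omega) x hx

lemma head?_ofRuns (a : ℕ) {r : List ℕ} (hr : ∀ c ∈ r, 0 < c) (hne : r ≠ []) :
    (ofRuns a r).head? = some a := by
  obtain ⟨c, r, rfl⟩ := List.exists_cons_of_ne_nil hne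
  obtain ⟨n, rfl⟩ := Nat.exists_eq_add_of_lt (hr c List.mem_cons_self)
  rfl

lemma rle_cons_of_head?_ne {a : ℕ} {t : List ℕ} (h : t.head? ≠ some a) :
    rle (a :: t) = 1 :: rle t := by
  cases t with
  | nil => rfl
  | cons b l =>
    have hab : a ≠ b := fun hab => h (by simp [hab])
    simp [rle, hab]

lemma rle_replicate_append (a n : ℕ) {t : List ℕ} (h : t.head? ≠ some a) :
    rle (List.replicate (n + 1) a ++ t) = (n + 1) :: rle t := by
  induction n with
  | zero => exact rle_cons_of_head?_ne h
  | succ n ih =>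
    rw [List.replicate_succ, List.cons_append, List.replicate_succ, List.cons_append]
    rw [List.replicate_succ, List.cons_append] at ih
    simp [rle, ih]

lemma rle_ofRuns {a : ℕ} (ha : a = 1 ∨ a = 2) {r : List ℕ} (hr : ∀ c ∈ r, 0 < c) :
    rle (ofRuns a r) = r := by
  induction r generalizing a with
  | nil => rfl
  | cons c r ih =>
    have hne : (ofRuns (3 - a) r).head? ≠ some a := by
      cases r with
      | nil => simp [ofRuns]
      | cons c' r' =>
        rw [head?_ofRuns _ (fun c hc => hr c (List.mem_cons_of_mem _ hc)) (List.cons_ne_nil _ _)]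
        simp only [ne_eq, Option.some.injEq]
        omega
    obtain ⟨n, rfl⟩ := Nat.exists_eq_add_of_lt (hr c (by simp))
    simp only [ofRuns, zero_add]
    rw [rle_replicate_append a n hne, ih (by omega) fun c hc => hr c (by simp [hc])]

lemma rle_cons_ne_nil (a : ℕ) (l : List ℕ) : rle (a :: l) ≠ [] := by
  cases l with
  | nil => simp [rle]
  | cons b l => unfold rle; split_ifs <;> [split; skip] <;> simp

lemma ofRuns_headI_rle {v : List ℕ} (hv : IsWord v) : ofRuns v.headI (rle v) = v := by
  induction v with
  | nil => rfl
  | cons a t ih =>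
    have ih := ih fun x hx => hv x (List.mem_cons_of_mem a hx)
    cases t with
    | nil => rfl
    | cons b l =>
      by_cases hab : a = b
      · subst hab
        obtain ⟨c, r, hcr⟩ := List.exists_cons_of_ne_nil (rle_cons_ne_nil a l)
        simp only [List.headI_cons, hcr] at ih
        simp only [rle, if_pos, hcr, List.headI_cons, ofRuns, List.replicate_succ,
          List.cons_append]
        simpa [ofRuns] using ih
      · have h3 : 3 - a = b := by
          have := hv a (by simp); have := hv b (by simp); omega
        simp only [List.headI_cons] at ih
        simp [rle, hab, ofRuns, h3, ih]

/-- The blocks `p` with `trim1 (p ++ w) = w`, for `w ≠ []` starting with the letter `a`: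
a leading `1` is always erased, so `p = []` is possible only when `a ≠ 1`. -/
def erasedRuns (a : ℕ) : Finset (List ℕ) := if a = 1 then {[1]} else {[1], []}

lemma card_erasedRuns (a : ℕ) : (erasedRuns a).card = if a = 1 then 1 else 2 := by
  unfold erasedRuns; split_ifs <;> rfl

lemma reverse_of_mem_erasedRuns {a : ℕ} {p : List ℕ} (hp : p ∈ erasedRuns a) : p.reverse = p := by
  unfold erasedRuns at hp; split_ifs at hp <;> simp at hp <;> rcases hp with rfl | rfl <;> rfl

lemma pos_of_mem_erasedRuns {a : ℕ} {p : List ℕ} (hp : p ∈ erasedRuns a) : ∀ c ∈ p, 0 < c := by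
  unfold erasedRuns at hp; split_ifs at hp <;> simp at hp <;> rcases hp with rfl | rfl <;> simp

lemma trim1_of_headI_ne {x : List ℕ} (h : x.headI ≠ 1) : trim1 x = x := by
  match x with
  | [] => rfl
  | 0 :: _ => rfl
  | 1 :: _ => simp at h
  | (_ + 2) :: _ => rfl

lemma trim1_eq_iff {w : List ℕ} (hw : w ≠ []) {x : List ℕ} :
    trim1 x = w ↔ ∃ p ∈ erasedRuns w.headI, x = p ++ w := by
  constructor
  · rintro rfl
    by_cases hx : x.headI = 1
    · obtain ⟨l, rfl⟩ : ∃ l, x = 1 :: l := by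
        cases x with
        | nil => exact absurd rfl hw
        | cons c l => exact ⟨l, by rw [← hx]; rfl⟩
      exact ⟨[1], by unfold erasedRuns; split_ifs <;> simp, rfl⟩
    · rw [trim1_of_headI_ne hx] at hw ⊢
      exact ⟨[], by simp [erasedRuns, hx], rfl⟩
  · rintro ⟨p, hp, rfl⟩
    unfold erasedRuns at hp
    split_ifs at hp with ha <;> simp only [Finset.mem_insert, Finset.mem_singleton] at hp
    · rw [hp]; rfl
    · rcases hp with rfl | rfl
      · rfl
      · exact trim1_of_headI_ne ha

lemma trim1_reverse_eq_iff {w : List ℕ} (hw : w ≠ []) {x : List ℕ} :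
    (trim1 x.reverse).reverse = w ↔ ∃ s ∈ erasedRuns w.reverse.headI, x = w ++ s := by
  rw [List.reverse_eq_iff, trim1_eq_iff (List.reverse_ne_nil_iff.2 hw)]
  refine exists_congr fun s => and_congr_right fun hs => ?_
  rw [← List.reverse_inj, List.reverse_reverse, List.reverse_append,
    reverse_of_mem_erasedRuns hs, List.reverse_reverse]

lemma headI_append_of_ne_nil {l : List ℕ} (t : List ℕ) (hl : l ≠ []) :
    (l ++ t).headI = l.headI := by
  obtain ⟨a, l, rfl⟩ := List.exists_cons_of_ne_nil hl
  rfl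

lemma D_eq_iff {w : List ℕ} (hw : w ≠ []) {v : List ℕ} :
    D v = w ↔ ∃ p ∈ erasedRuns w.headI, ∃ s ∈ erasedRuns w.reverse.headI,
      rle v = p ++ w ++ s := by
  unfold D
  rw [trim1_eq_iff hw]
  refine exists_congr fun p => and_congr_right fun _ => ?_
  have hpw : p ++ w ≠ [] := by simp [hw]
  rw [trim1_reverse_eq_iff hpw, List.reverse_append,
    headI_append_of_ne_nil _ (List.reverse_ne_nil_iff.2 hw)]

lemma eq_of_append_eq_append {w : List ℕ} (hw : w ≠ []) {p p' s s' : List ℕ}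
    (hp : p ∈ erasedRuns w.headI) (hp' : p' ∈ erasedRuns w.headI)
    (h : p ++ w ++ s = p' ++ w ++ s') : p = p' ∧ s = s' := by
  suffices hpp : p = p' by
    subst hpp; exact ⟨rfl, by simpa using h⟩
  have hhead := congrArg List.headI h
  simp only [List.append_assoc] at hhead
  unfold erasedRuns at hp hp'
  split_ifs at hp hp' with ha <;>
    simp only [Finset.mem_insert, Finset.mem_singleton] at hp hp'
  · rw [hp, hp']
  · rcases hp with rfl | rfl <;> rcases hp' with rfl | rfl <;>
      simp only [List.nil_append, List.singleton_append, List.headI_cons,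
        headI_append_of_ne_nil _ hw] at hhead ⊢ <;> omega

def primitiveOf (w : List ℕ) (x : ℕ × List ℕ × List ℕ) : List ℕ :=
  ofRuns x.1 (x.2.1 ++ w ++ x.2.2)

def primitiveParams (w : List ℕ) : Finset (ℕ × List ℕ × List ℕ) :=
  {1, 2} ×ˢ erasedRuns w.headI ×ˢ erasedRuns w.reverse.headI

section primitiveParams

variable {w : List ℕ} {x : ℕ × List ℕ × List ℕ}

lemma mem_primitiveParams : x ∈ primitiveParams w ↔
    (x.1 = 1 ∨ x.1 = 2) ∧ x.2.1 ∈ erasedRuns w.headI ∧ x.2.2 ∈ erasedRuns w.reverse.headI := by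
  simp only [primitiveParams, Finset.mem_product, Finset.mem_insert, Finset.mem_singleton]

lemma pos_of_mem_primitiveParams (hw : IsWord w) (hx : x ∈ primitiveParams w) :
    ∀ c ∈ x.2.1 ++ w ++ x.2.2, 0 < c := by
  rw [mem_primitiveParams] at hx
  intro c hc
  simp only [List.mem_append] at hc
  rcases hc with (hc | hc) | hc
  · exact pos_of_mem_erasedRuns hx.2.1 c hc
  · rcases hw c hc with rfl | rfl <;> norm_num
  · exact pos_of_mem_erasedRuns hx.2.2 c hc

lemma primitiveOf_injOn (hw : IsWord w) (hne : w ≠ []) :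
    Set.InjOn (primitiveOf w) (primitiveParams w) := by
  rintro ⟨a, p, s⟩ hx ⟨a', p', s'⟩ hx' h
  have hrle := congrArg rle h
  rw [primitiveOf, primitiveOf, rle_ofRuns (mem_primitiveParams.1 hx).1
    (pos_of_mem_primitiveParams hw hx), rle_ofRuns (mem_primitiveParams.1 hx').1
    (pos_of_mem_primitiveParams hw hx')] at hrle
  obtain ⟨rfl, rfl⟩ := eq_of_append_eq_append hne (mem_primitiveParams.1 hx).2.1
    (mem_primitiveParams.1 hx').2.1 hrle
  have hr : p ++ w ++ s ≠ [] := by simp [hne]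
  have hhead := congrArg List.head? h
  rw [primitiveOf, primitiveOf, head?_ofRuns a (pos_of_mem_primitiveParams hw hx) hr,
    head?_ofRuns a' (pos_of_mem_primitiveParams hw hx') hr, Option.some_inj] at hhead
  rw [hhead]

lemma setOf_primitive_eq (hw : IsWord w) (hne : w ≠ []) :
    {v | Primitive v w} = ((primitiveParams w).image (primitiveOf w) : Set (List ℕ)) := by
  ext v
  simp only [Set.mem_ofPred_eq, Finset.coe_image, Set.mem_image, Finset.mem_coe]
  constructor
  · rintro ⟨hv, hD⟩
    obtain ⟨a, t, rfl⟩ : ∃ a t, v = a :: t := by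
      cases v with
      | nil => exact absurd hD.symm hne
      | cons a t => exact ⟨a, t, rfl⟩
    obtain ⟨p, hp, s, hs, hrle⟩ := (D_eq_iff hne).1 hD
    refine ⟨(a, p, s), mem_primitiveParams.2 ⟨hv a List.mem_cons_self, hp, hs⟩, ?_⟩
    rw [primitiveOf, ← hrle]
    exact ofRuns_headI_rle hv
  · rintro ⟨x, hx, rfl⟩
    obtain ⟨ha, hp, hs⟩ := mem_primitiveParams.1 hx
    exact ⟨isWord_ofRuns ha _, (D_eq_iff hne).2
      ⟨x.2.1, hp, x.2.2, hs, rle_ofRuns ha (pos_of_mem_primitiveParams hw hx)⟩⟩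

lemma ncard_setOf_primitive (hw : IsWord w) (hne : w ≠ []) :
    {v | Primitive v w}.ncard =
      2 * (if w.headI = 1 then 1 else 2) * (if w.reverse.headI = 1 then 1 else 2) := by
  rw [setOf_primitive_eq hw hne, Set.ncard_coe_finset,
    Finset.card_image_of_injOn (primitiveOf_injOn hw hne), primitiveParams,
    Finset.card_product, Finset.card_product, card_erasedRuns, card_erasedRuns, mul_assoc]
  rfl

end primitiveParams

/-- a nonempty C∞-word has exactly two primitives if it begins and
ends with 1, exactly eight if it begins and ends with 2, and exactly four otherwise. -/
theorem primitive_count (w : List ℕ) (hw : Cinf w) (hne : w ≠ []) :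
    {v | Primitive v w}.ncard =
      if w.headI = 1 ∧ w.getLast hne = 1 then 2
      else if w.headI = 2 ∧ w.getLast hne = 2 then 8
      else 4 := by
  have hword : IsWord w := hw 0
  have hlast : w.reverse.headI = w.getLast hne := by
    obtain ⟨l, b, rfl⟩ := (List.eq_nil_or_concat' w).resolve_left hne
    simp
  have hfirst : w.headI ∈ w := by
    obtain ⟨a, t, rfl⟩ := List.exists_cons_of_ne_nil hne
    exact List.mem_cons_self
  rw [ncard_setOf_primitive hword hne, hlast]
  rcases hword _ hfirst with h | h <;> rcases hword _ (List.getLast_mem hne) with h' | h' <;>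
    simp [h, h']

end CInfWords
end

section
/- For every C∞-word w, at least one of the words 1w and 2w is a C∞-word, and at least one of the words w1 and w2 is a C∞-word. -/
/-!
Left extension, by induction on the length of `w`. Let the first run of `w` consist of the
letter `a` and have length `c ∈ {1, 2}`, and let `b ≠ a` be the other letter. If `c = 2`,
prepending `b` adds a run of length 1 that `D` erases, so `D (b w) = D w`. If `c = 1`, then
`D w` is shorter than `w`, so `1 · D w` or `2 · D w` is C∞ by induction; in the first case
`D (b w)` is `1 · D w` (or `ε`), in the second `D (a w) = 2 · D w`.

Right extension follows since `D` commutes with reversal.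
-/

namespace CInfWords

open scoped Classical

def bumpHead : List ℕ → List ℕ
  | [] => [1]
  | c :: r => (c + 1) :: r

def bumpLast (l : List ℕ) : List ℕ := (bumpHead l.reverse).reverse

def trimLast (l : List ℕ) : List ℕ := (trim1 l.reverse).reverse

lemma bumpHead_ne_nil (l : List ℕ) : bumpHead l ≠ [] := by
  cases l <;> simp [bumpHead]

lemma length_bumpHead_le (l : List ℕ) : (bumpHead l).length ≤ l.length + 1 := by
  cases l <;> simp [bumpHead]

lemma bumpHead_append {l : List ℕ} (hl : l ≠ []) (m : List ℕ) :
    bumpHead (l ++ m) = bumpHead l ++ m := by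
  obtain ⟨c, r, rfl⟩ := List.exists_cons_of_ne_nil hl
  rfl

lemma bumpLast_cons (c : ℕ) {l : List ℕ} (hl : l ≠ []) :
    bumpLast (c :: l) = c :: bumpLast l := by
  simp [bumpLast, bumpHead_append (List.reverse_ne_nil_iff.mpr hl)]

lemma bumpHead_bumpLast {l : List ℕ} (hl : l ≠ []) :
    bumpHead (bumpLast l) = bumpLast (bumpHead l) := by
  obtain ⟨c, r, rfl⟩ := List.exists_cons_of_ne_nil hl
  rcases eq_or_ne r [] with rfl | hr
  · rfl
  · rw [bumpLast_cons _ hr]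
    exact (bumpLast_cons _ hr).symm

lemma trim1_cons : ∀ (c : ℕ) (l : List ℕ), trim1 (c :: l) = trim1 [c] ++ l
  | 0, _ => rfl
  | 1, _ => rfl
  | _ + 2, _ => rfl

lemma trim1_singleton (c : ℕ) : trim1 [c] = if c = 1 then [] else [c] := by
  split_ifs with h
  · rw [h]; rfl
  · match c, h with
    | 0, _ => rfl
    | _ + 2, _ => rfl

lemma trimLast_concat (l : List ℕ) (c : ℕ) : trimLast (l ++ [c]) = l ++ trimLast [c] := by
  simp only [trimLast, List.reverse_append, List.reverse_singleton, List.singleton_append]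
  rw [trim1_cons]; simp

lemma trimLast_singleton (c : ℕ) : trimLast [c] = trim1 [c] := by
  simp only [trimLast, List.reverse_singleton]
  rw [trim1_singleton]
  split_ifs <;> rfl

lemma trimLast_cons (c : ℕ) {l : List ℕ} (hl : l ≠ []) :
    trimLast (c :: l) = c :: trimLast l := by
  obtain ⟨m, x, rfl⟩ := (List.eq_nil_or_concat' l).resolve_left hl
  rw [← List.cons_append, trimLast_concat, trimLast_concat, List.cons_append]

lemma trimLast_cons_of_ne_one {c : ℕ} (hc : c ≠ 1) (l : List ℕ) :
    trimLast (c :: l) = c :: trimLast l := by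
  rcases eq_or_ne l [] with rfl | hl
  · rw [trimLast_singleton, trim1_singleton, if_neg hc]; rfl
  · exact trimLast_cons c hl

lemma trim1_trimLast_one_cons (l : List ℕ) : trim1 (trimLast (1 :: l)) = trimLast l := by
  rcases eq_or_ne l [] with rfl | hl
  · rfl
  · rw [trimLast_cons _ hl]; rfl

lemma trim1_trimLast_comm (l : List ℕ) : trim1 (trimLast l) = trimLast (trim1 l) := by
  rcases l with _ | ⟨c, l⟩
  · rfl
  rcases List.eq_nil_or_concat' l with rfl | ⟨m, x, rfl⟩
  · rw [trimLast_singleton, trim1_singleton]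
    split_ifs
    · rfl
    · exact (trimLast_singleton c).symm
  · calc trim1 (trimLast (c :: (m ++ [x]))) = trim1 [c] ++ m ++ trimLast [x] := by
          rw [← List.cons_append, trimLast_concat, List.cons_append, trim1_cons c (m ++ _),
            List.append_assoc]
      _ = trimLast (trim1 (c :: (m ++ [x]))) := by
          rw [trim1_cons c (m ++ _), ← List.append_assoc, trimLast_concat]

lemma eq_one_or_mem_trim1_of_mem {x : ℕ} {l : List ℕ} (hx : x ∈ l) :
    x = 1 ∨ x ∈ trim1 l := by
  rcases l with _ | ⟨c, l⟩
  · simp at hx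
  rw [trim1_cons, trim1_singleton]
  split_ifs with hc <;> simp_all

lemma eq_one_or_mem_trimLast_of_mem {x : ℕ} {l : List ℕ} (hx : x ∈ l) :
    x = 1 ∨ x ∈ trimLast l := by
  simpa [trimLast] using eq_one_or_mem_trim1_of_mem (List.mem_reverse.mpr hx)

lemma length_trim1_le (l : List ℕ) : (trim1 l).length ≤ l.length := by
  rcases l with _ | ⟨c, l⟩
  · rfl
  · rw [trim1_cons, trim1_singleton]
    split_ifs <;> simp

lemma length_trimLast_le (l : List ℕ) : (trimLast l).length ≤ l.length := by
  simpa [trimLast] using length_trim1_le l.reverse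

lemma rle_cons (a : ℕ) (l : List ℕ) :
    rle (a :: l) = if l.head? = some a then bumpHead (rle l) else 1 :: rle l := by
  rcases l with _ | ⟨b, l⟩
  · rfl
  · by_cases h : a = b
    · subst h; simp only [List.head?_cons, if_true, rle]; rfl
    · simp only [List.head?_cons, Option.some.injEq, rle, if_neg h, if_neg (Ne.symm h)]

lemma rle_ne_nil {l : List ℕ} (hl : l ≠ []) : rle l ≠ [] := by
  obtain ⟨a, l, rfl⟩ := List.exists_cons_of_ne_nil hl
  rw [rle_cons]
  split_ifs
  · exact bumpHead_ne_nil _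
  · simp

lemma length_rle_le (l : List ℕ) : (rle l).length ≤ l.length := by
  induction l with
  | nil => rfl
  | cons a l ih =>
    rw [rle_cons]
    split_ifs
    · exact (length_bumpHead_le _).trans (by simpa using ih)
    · simpa using ih

lemma rle_concat (l : List ℕ) (a : ℕ) :
    rle (l ++ [a]) = if l.getLast? = some a then bumpLast (rle l) else rle l ++ [1] := by
  induction l with
  | nil => rfl
  | cons b l ih =>
    rcases eq_or_ne l [] with rfl | hl
    · by_cases h : a = b
      · subst h; simp [rle, bumpHead, bumpLast]
      · simp [rle, Ne.symm h]
    · have hrle := rle_ne_nil hl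
      have hlast : (b :: l).getLast? = l.getLast? := by
        obtain ⟨c, l', rfl⟩ := List.exists_cons_of_ne_nil hl
        exact List.getLast?_cons_cons
      rw [List.cons_append, rle_cons b, ih, rle_cons b l, List.head?_append_of_ne_nil _ hl, hlast]
      split_ifs
      · exact bumpHead_bumpLast hrle
      · exact bumpHead_append hrle _
      · exact (bumpLast_cons 1 hrle).symm
      · rfl

lemma rle_reverse (l : List ℕ) : rle l.reverse = (rle l).reverse := by
  induction l with
  | nil => rfl
  | cons a l ih =>
    rw [List.reverse_cons, rle_concat, List.getLast?_reverse, ih, rle_cons]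
    split_ifs <;> simp [bumpLast]

lemma D_eq (w : List ℕ) : D w = trim1 (trimLast (rle w)) := rfl

lemma D_reverse (w : List ℕ) : D w.reverse = (D w).reverse := by
  have trim1_reverse (l : List ℕ) : trim1 l.reverse = (trimLast l).reverse := by
    simp [trimLast]
  have trimLast_reverse (l : List ℕ) : trimLast l.reverse = (trim1 l).reverse := by
    simp [trimLast]
  rw [D_eq, D_eq, rle_reverse, trimLast_reverse, trim1_reverse, trim1_trimLast_comm]

lemma isWord_rle_of_isWord_D {w : List ℕ} (h : IsWord (D w)) : IsWord (rle w) := by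
  intro x hx
  rcases eq_one_or_mem_trimLast_of_mem hx with rfl | hx
  · exact Or.inl rfl
  rcases eq_one_or_mem_trim1_of_mem hx with rfl | hx
  · exact Or.inl rfl
  exact h x hx

lemma D_of_rle_eq_one_cons {w r : List ℕ} (h : rle w = 1 :: r) : D w = trimLast r := by
  rw [D_eq, h, trim1_trimLast_one_cons]

lemma length_D_lt_of_rle_eq_one_cons {w r : List ℕ} (h : rle w = 1 :: r) :
    (D w).length < w.length :=
  calc (D w).length ≤ r.length := D_of_rle_eq_one_cons h ▸ length_trimLast_le r
    _ < (rle w).length := by simp [h]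
    _ ≤ w.length := length_rle_le w

lemma D_cons_of_head?_ne {b : ℕ} {w : List ℕ} (hb : w.head? ≠ some b) :
    D (b :: w) = trimLast (rle w) := by
  rw [D_eq, rle_cons, if_neg hb, trim1_trimLast_one_cons]

lemma D_cons_of_rle_eq_two_cons {b : ℕ} {w r : List ℕ} (hb : w.head? ≠ some b)
    (h : rle w = 2 :: r) : D (b :: w) = D w := by
  rw [D_cons_of_head?_ne hb, D_eq, h, trimLast_cons_of_ne_one (by norm_num)]
  rfl

lemma D_cons_eq_nil_or_one_cons {b : ℕ} {w r : List ℕ} (hb : w.head? ≠ some b)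
    (h : rle w = 1 :: r) : D (b :: w) = [] ∨ D (b :: w) = 1 :: D w := by
  rw [D_cons_of_head?_ne hb, h, D_of_rle_eq_one_cons h]
  rcases eq_or_ne r [] with rfl | hr
  · exact Or.inl rfl
  · exact Or.inr (trimLast_cons 1 hr)

lemma D_cons_of_rle_eq_one_cons {a : ℕ} {w r : List ℕ} (ha : w.head? = some a)
    (h : rle w = 1 :: r) : D (a :: w) = 2 :: D w := by
  rw [D_eq, rle_cons, if_pos ha, h, D_of_rle_eq_one_cons h]
  change trim1 (trimLast (2 :: r)) = _
  rw [trimLast_cons_of_ne_one (by norm_num)]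
  rfl

lemma cinf_iff {w : List ℕ} : Cinf w ↔ IsWord w ∧ Cinf (D w) := by
  constructor
  · intro h
    exact ⟨h 0, fun k => h (k + 1)⟩
  · rintro ⟨h0, h⟩ (_ | k)
    exacts [h0, h k]

lemma cinf_nil : Cinf [] := by
  intro k
  rw [Function.iterate_fixed (show D [] = [] from rfl)]
  simp [IsWord]

lemma cinf_reverse_iff {w : List ℕ} : Cinf w.reverse ↔ Cinf w := by
  have hcomm : Function.Commute D List.reverse := D_reverse
  have h k : D^[k] w.reverse = (D^[k] w).reverse := (hcomm.iterate_left k).eq w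
  simp only [Cinf, IsWord, h, List.mem_reverse]

theorem cinf_one_cons_or_two_cons {w : List ℕ} (hw : Cinf w) :
    Cinf (1 :: w) ∨ Cinf (2 :: w) := by
  induction hn : w.length using Nat.strong_induction_on generalizing w with
  | _ n ih =>
  subst hn
  suffices ∃ b, (b = 1 ∨ b = 2) ∧ Cinf (D (b :: w)) by
    obtain ⟨b, hb, hD⟩ := this
    have hbw : Cinf (b :: w) :=
      cinf_iff.2 ⟨List.forall_mem_cons.2 ⟨hb, (cinf_iff.1 hw).1⟩, hD⟩
    rcases hb with rfl | rfl
    exacts [Or.inl hbw, Or.inr hbw]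
  rcases w with _ | ⟨a, t⟩
  · exact ⟨1, Or.inl rfl, cinf_nil⟩
  obtain ⟨hword, hD⟩ := cinf_iff.1 hw
  have ha : a = 1 ∨ a = 2 := hword a List.mem_cons_self
  have hother : (3 - a = 1 ∨ 3 - a = 2) ∧ (a :: t).head? ≠ some (3 - a) := by
    simp only [List.head?_cons, ne_eq, Option.some.injEq]
    omega
  obtain ⟨c, r, hcr⟩ := List.exists_cons_of_ne_nil (rle_ne_nil (List.cons_ne_nil a t))
  rcases isWord_rle_of_isWord_D (hD 0) c (hcr ▸ List.mem_cons_self) with rfl | rfl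
  · rcases ih _ (length_D_lt_of_rle_eq_one_cons hcr) hD rfl with hone | htwo
    · refine ⟨3 - a, hother.1, ?_⟩
      rcases D_cons_eq_nil_or_one_cons hother.2 hcr with h | h <;> rw [h]
      exacts [cinf_nil, hone]
    · exact ⟨a, ha, by rwa [D_cons_of_rle_eq_one_cons rfl hcr]⟩
  · exact ⟨3 - a, hother.1, by rwa [D_cons_of_rle_eq_two_cons hother.2 hcr]⟩

/-- every C∞-word extends to the left and to the right inside C∞. -/
theorem one_letter_extension (w : List ℕ) (hw : Cinf w) :
    (Cinf (1 :: w) ∨ Cinf (2 :: w)) ∧ (Cinf (w ++ [1]) ∨ Cinf (w ++ [2])) := by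
  refine ⟨cinf_one_cons_or_two_cons hw, ?_⟩
  simpa only [← cinf_reverse_iff (w := w ++ _), List.reverse_append, List.reverse_singleton,
    List.singleton_append] using cinf_one_cons_or_two_cons (cinf_reverse_iff.2 hw)

end CInfWords
end

section
/- Let w be a C∞-word of height k > 0. If w is single-rooted, then w has exactly one factor that is a single-rooted minimal word of height k; if w is double-rooted, then w has exactly two distinct factors that are single-rooted minimal words of height k. -/
/-!
For a C∞-word `w` of height at least two, `D` maps the single-rooted minimal factors of `w` of
full height bijectively onto those of `D w`. A minimal word `v` with `D v = u` has run-length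
encoding `padL u ++ u ++ padR u`. Since the runs of a C∞-word have length at most two, the runs
of such a factor that spell `u` are maximal runs of `w`, so an occurrence of `v` in `w` gives an
occurrence of `u` in `D w` at a position determined by that of `v`; as every such factor occurs
only once (by induction), `D` is injective on them. Conversely, every occurrence of `u` in `D w`
extends by the adjacent letters that `padL u` and `padR u` demand to such a factor of `w`.
At height one these factors are the letters of the root, which are distinct.
-/

namespace CInfWords

open scoped Classical

def decode (a : ℕ) : List ℕ → List ℕ
  | [] => []
  | c :: r => List.replicate c a ++ decode (3 - a) r

@[simp] lemma decode_nil (a : ℕ) : decode a [] = [] := rfl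

@[simp] lemma decode_cons (a c : ℕ) (r : List ℕ) :
    decode a (c :: r) = List.replicate c a ++ decode (3 - a) r := rfl

@[simp] lemma length_decode (a : ℕ) (r : List ℕ) : (decode a r).length = r.sum := by
  induction r generalizing a <;> simp [*]

lemma decode_append (a : ℕ) (r q : List ℕ) :
    decode a (r ++ q) = decode a r ++ decode ((3 - ·)^[r.length] a) q := by
  induction r generalizing a with
  | nil => rfl
  | cons c r ih => simp [ih]

lemma isWord_decode {a : ℕ} (ha : a = 1 ∨ a = 2) (r : List ℕ) : IsWord (decode a r) := by
  induction r generalizing a with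
  | nil => simp [IsWord]
  | cons c r ih =>
    intro x hx
    simp only [decode_cons, List.mem_append, List.mem_replicate] at hx
    rcases hx with ⟨-, rfl⟩ | hx
    · exact ha
    · exact ih (by omega) x hx

lemma head?_decode (a : ℕ) {r : List ℕ} (hr : r ≠ []) (hpos : ∀ c ∈ r, 0 < c) :
    (decode a r).head? = some a := by
  obtain ⟨c, r, rfl⟩ := List.exists_cons_of_ne_nil hr
  obtain ⟨k, hk⟩ := Nat.exists_eq_add_one.mpr (hpos c List.mem_cons_self)
  simp [hk, List.replicate_succ]

lemma exists_decode_eq_append_singleton (a : ℕ) {r : List ℕ} (hr : r ≠ [])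
    (hpos : ∀ c ∈ r, 0 < c) :
    ∃ X b, decode a r = X ++ [b] ∧ (3 - ·)^[r.length] a = 3 - b := by
  obtain ⟨r, c, rfl⟩ := (List.eq_nil_or_concat r).resolve_left hr
  obtain ⟨k, hk⟩ := Nat.exists_eq_add_one.mpr (hpos c (by simp))
  refine ⟨decode a r ++ List.replicate k ((3 - ·)^[r.length] a), (3 - ·)^[r.length] a, ?_, ?_⟩
  · simp [decode_append, hk, List.replicate_succ']
  · simp [Function.iterate_succ_apply']

lemma rle_cons_cons_of_ne {a b : ℕ} (h : a ≠ b) (l : List ℕ) :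
    rle (a :: b :: l) = 1 :: rle (b :: l) := by
  simp [rle, h]

lemma rle_cons_cons_self (a : ℕ) (l : List ℕ) :
    rle (a :: a :: l) = ((rle (a :: l)).headI + 1) :: (rle (a :: l)).tail := by
  rw [rle, if_pos rfl]
  rcases h : rle (a :: l) with _ | ⟨c, r⟩
  · exact absurd h (rle_cons_ne_nil a l)
  · rfl

lemma sum_rle (w : List ℕ) : (rle w).sum = w.length := by
  induction w with
  | nil => rfl
  | cons a l ih =>
    rcases l with _ | ⟨b, l⟩
    · rfl
    by_cases hab : a = b
    · subst hab
      obtain ⟨c, r, hcr⟩ := List.exists_cons_of_ne_nil (rle_cons_ne_nil a l)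
      rw [hcr] at ih
      simp only [rle_cons_cons_self, hcr, List.headI_cons, List.tail_cons, List.sum_cons,
        List.length_cons, ← ih]
      omega
    · simp only [rle_cons_cons_of_ne hab, List.sum_cons, ih, List.length_cons]
      omega

lemma pos_of_mem_rle {w : List ℕ} : ∀ x ∈ rle w, 0 < x := by
  induction w with
  | nil => simp [rle]
  | cons a l ih =>
    rcases l with _ | ⟨b, l⟩
    · simp [rle]
    by_cases hab : a = b
    · subst hab
      obtain ⟨c, r, hcr⟩ := List.exists_cons_of_ne_nil (rle_cons_ne_nil a l)
      rw [hcr] at ih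
      simp only [rle_cons_cons_self, hcr, List.headI_cons, List.tail_cons, List.mem_cons]
      rintro x (rfl | hx)
      · omega
      · exact ih x (List.mem_cons_of_mem c hx)
    · simp only [rle_cons_cons_of_ne hab, List.mem_cons]
      rintro x (rfl | hx)
      · exact Nat.one_pos
      · exact ih x hx

lemma rle_replicate_append_s6 {a c : ℕ} (hc : 0 < c) {X : List ℕ} (hX : X.head? ≠ some a) :
    rle (List.replicate c a ++ X) = c :: rle X := by
  induction c with
  | zero => omega
  | succ c ih =>
    rcases Nat.eq_zero_or_pos c with rfl | hc
    · rcases X with _ | ⟨b, X⟩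
      · rfl
      · exact rle_cons_cons_of_ne (fun h => hX (by simp [h])) X
    · obtain ⟨k, rfl⟩ := Nat.exists_eq_add_one.mpr hc
      have := ih hc
      simp only [List.replicate_succ, List.cons_append] at this ⊢
      rw [rle_cons_cons_self, this]
      rfl

lemma rle_decode (a : ℕ) {r : List ℕ} (hpos : ∀ c ∈ r, 0 < c) : rle (decode a r) = r := by
  induction r generalizing a with
  | nil => rfl
  | cons c r ih =>
    have hr : ∀ x ∈ r, 0 < x := fun x hx => hpos x (List.mem_cons_of_mem c hx)
    have hX : (decode (3 - a) r).head? ≠ some a := by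
      rcases eq_or_ne r [] with rfl | hne
      · simp
      · rw [head?_decode _ hne hr]
        simp only [ne_eq, Option.some.injEq]
        omega
    rw [decode_cons, rle_replicate_append_s6 (hpos c List.mem_cons_self) hX, ih _ hr]

lemma decode_rle {w : List ℕ} (hw : IsWord w) {a : ℕ} (ha : w.head? = some a) :
    decode a (rle w) = w := by
  induction w generalizing a with
  | nil => simp at ha
  | cons x l ih =>
    obtain rfl : x = a := by simpa using ha
    rcases l with _ | ⟨b, l⟩
    · simp [rle]
    have hl := ih (fun y hy => hw y (List.mem_cons_of_mem x hy)) (a := b) rfl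
    by_cases hxb : x = b
    · subst hxb
      obtain ⟨c, r, hcr⟩ := List.exists_cons_of_ne_nil (rle_cons_ne_nil x l)
      rw [hcr, decode_cons] at hl
      rw [rle_cons_cons_self, hcr]
      simp [List.replicate_succ, hl]
    · have hx := hw x List.mem_cons_self
      have hb := hw b (by simp)
      rw [rle_cons_cons_of_ne hxb, decode_cons, show 3 - x = b by omega, hl]
      rfl

lemma rle_append {p q : List ℕ} (h : p.getLast? ≠ q.head?) : rle (p ++ q) = rle p ++ rle q := by
  induction p with
  | nil => rfl
  | cons c p ih =>
    rcases p with _ | ⟨c', p⟩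
    · rcases q with _ | ⟨d, q⟩
      · simp [rle]
      · exact rle_cons_cons_of_ne (fun hcd => h (by simp [hcd])) q
    have ih := ih (by simpa [List.getLast?_cons_cons] using h)
    simp only [List.cons_append] at ih ⊢
    by_cases hcc : c = c'
    · subst hcc
      obtain ⟨k, r, hkr⟩ := List.exists_cons_of_ne_nil (rle_cons_ne_nil c p)
      rw [rle_cons_cons_self, rle_cons_cons_self, ih, hkr]
      rfl
    · rw [rle_cons_cons_of_ne hcc, rle_cons_cons_of_ne hcc, ih]
      rfl

lemma rle_append_append {p y q : List ℕ} (hy : y ≠ []) (hpy : p.getLast? ≠ y.head?)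
    (hyq : y.getLast? ≠ q.head?) : rle (p ++ y ++ q) = rle p ++ rle y ++ rle q := by
  rw [rle_append (by rwa [List.getLast?_append_of_ne_nil _ hy]), rle_append hpy]

lemma exists_le_mem_rle_cons (c : ℕ) {l : List ℕ} : ∀ x ∈ rle l, ∃ y ∈ rle (c :: l), x ≤ y := by
  rcases l with _ | ⟨d, l⟩
  · simp [rle]
  by_cases hcd : c = d
  · subst hcd
    obtain ⟨k, r, hkr⟩ := List.exists_cons_of_ne_nil (rle_cons_ne_nil c l)
    rw [rle_cons_cons_self, hkr]
    intro x hx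
    rcases List.mem_cons.mp hx with rfl | hx
    · exact ⟨x + 1, by simp⟩
    · exact ⟨x, by simp [hx]⟩
  · rw [rle_cons_cons_of_ne hcd]
    exact fun x hx => ⟨x, List.mem_cons_of_mem 1 hx, le_rfl⟩

lemma exists_le_mem_rle_append (p : List ℕ) {q : List ℕ} :
    ∀ x ∈ rle q, ∃ y ∈ rle (p ++ q), x ≤ y := by
  induction p with
  | nil => exact fun x hx => ⟨x, hx, le_rfl⟩
  | cons c p ih =>
    intro x hx
    obtain ⟨y, hy, hxy⟩ := ih x hx
    obtain ⟨z, hz, hyz⟩ := exists_le_mem_rle_cons c y hy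
    exact ⟨z, hz, hxy.trans hyz⟩

lemma le_headI_rle_replicate_append (a n : ℕ) (q : List ℕ) :
    n ≤ (rle (List.replicate n a ++ q)).headI := by
  induction n with
  | zero => exact Nat.zero_le _
  | succ n ih =>
    rcases n with _ | n
    · obtain ⟨k, r, hkr⟩ := List.exists_cons_of_ne_nil (rle_cons_ne_nil a q)
      show 1 ≤ (rle (a :: q)).headI
      rw [hkr]
      exact pos_of_mem_rle k (by rw [hkr]; exact List.mem_cons_self)
    · simp only [List.replicate_succ, List.cons_append] at ih ⊢
      rw [rle_cons_cons_self]
      simpa using ih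

lemma exists_le_mem_rle_of_infix {a n : ℕ} (hn : 0 < n) {w : List ℕ}
    (h : List.replicate n a <:+: w) : ∃ c ∈ rle w, n ≤ c := by
  obtain ⟨p, q, rfl⟩ := h
  obtain ⟨k, r, hkr⟩ :=
    List.exists_cons_of_ne_nil (rle_cons_ne_nil a (List.replicate (n - 1) a ++ q))
  have hrep : List.replicate n a ++ q = a :: (List.replicate (n - 1) a ++ q) := by
    obtain ⟨m, rfl⟩ := Nat.exists_eq_add_one.mpr hn
    rfl
  have hk := le_headI_rle_replicate_append a n q
  rw [hrep, hkr] at hk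
  rw [List.append_assoc, hrep]
  obtain ⟨y, hy, hky⟩ := exists_le_mem_rle_append p k (by rw [hkr]; exact List.mem_cons_self)
  exact ⟨y, hy, hk.trans hky⟩

lemma sum_eq_length_of_pad {d : List ℕ} (hd : d = [] ∨ d = [1]) : d.sum = d.length := by
  rcases hd with rfl | rfl <;> rfl

lemma length_eq_of_rle_eq {p u dL dR : List ℕ} (hrle : rle p = dL ++ u ++ dR)
    (hdL : dL = [] ∨ dL = [1]) (hdR : dR = [] ∨ dR = [1]) :
    p.length = u.sum + dL.length + dR.length := by
  rw [← sum_rle, hrle, List.sum_append, List.sum_append, sum_eq_length_of_pad hdL,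
    sum_eq_length_of_pad hdR]
  omega

lemma eq_append_trim1 (l : List ℕ) :
    ∃ δ, l = δ ++ trim1 l ∧ (δ = [] ∧ l.head? ≠ some 1 ∨ δ = [1]) := by
  rcases l with _ | ⟨x, l⟩
  · exact ⟨[], rfl, Or.inl ⟨rfl, by simp⟩⟩
  · by_cases hx : x = 1
    · subst hx
      exact ⟨[1], rfl, Or.inr rfl⟩
    · refine ⟨[], ?_, Or.inl ⟨rfl, by simpa using hx⟩⟩
      rw [trim1.eq_def]
      split
      · simp_all
      · rfl

lemma exists_rle_eq_append_D_append (w : List ℕ) :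
    ∃ dL dR, rle w = dL ++ D w ++ dR ∧ (dL = [] ∨ dL = [1]) ∧ (dR = [] ∨ dR = [1]) ∧
      (dL = [] → (D w).head? ≠ some 1) ∧ (dR = [] → (D w).getLast? ≠ some 1) := by
  obtain ⟨δR, hR, hδR⟩ := eq_append_trim1 (rle w).reverse
  obtain ⟨dL, hL, hdL⟩ := eq_append_trim1 (trim1 (rle w).reverse).reverse
  have hrle : rle w = dL ++ D w ++ δR.reverse := by
    rw [D, ← hL, ← List.reverse_append, ← hR, List.reverse_reverse]
  refine ⟨dL, δR.reverse, hrle, hdL.imp And.left id, ?_, ?_, ?_⟩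
  · rcases hδR with ⟨rfl, -⟩ | rfl <;> simp
  · rintro rfl
    rcases hdL with ⟨-, h⟩ | h
    · rwa [hL, List.nil_append] at h
    · simp at h
  · intro hδ h1
    rcases hδR with ⟨-, h⟩ | h
    · rw [List.head?_reverse, hrle, List.getLast?_append, hδ] at h
      simp [List.getLast?_append, h1] at h
    · simp [h] at hδ

lemma D_length_lt {w : List ℕ} (hw : w ≠ []) : (D w).length < w.length := by
  obtain ⟨dL, dR, hrle, hdL, hdR, hL, -⟩ := exists_rle_eq_append_D_append w
  have hlen := length_eq_of_rle_eq hrle hdL hdR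
  rcases hne : D w with _ | ⟨c, r⟩
  · simpa using List.length_pos_iff.mpr hw
  · have hpos : ∀ x ∈ c :: r, 1 ≤ x := fun x hx => pos_of_mem_rle x
      (by rw [hrle, hne]; exact List.mem_append_left _ (List.mem_append_right _ hx))
    have hr := List.length_le_sum_of_one_le r (fun x hx => hpos x (List.mem_cons_of_mem c hx))
    have hc := hpos c List.mem_cons_self
    rw [hne] at hlen hL
    simp only [List.sum_cons, List.length_cons] at hlen ⊢
    rcases hdL with rfl | rfl
    · have : c ≠ 1 := fun h => hL rfl (by simp [h])
      simp only [List.length_nil] at hlen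
      omega
    · simp only [List.length_singleton] at hlen
      omega

lemma D_nil : D [] = [] := rfl

lemma iterate_D_nil (n : ℕ) : D^[n] [] = [] :=
  Function.iterate_fixed D_nil n

lemma iterate_length_D (w : List ℕ) : D^[w.length] w = [] := by
  induction h : w.length using Nat.strong_induction_on generalizing w with
  | _ n ih =>
    rcases eq_or_ne w [] with rfl | hw
    · exact iterate_D_nil n
    · have hlt := D_length_lt hw
      obtain ⟨m, rfl⟩ := Nat.exists_eq_add_one.mpr (h ▸ List.length_pos_iff.mpr hw)
      rw [Function.iterate_succ_apply, ← Nat.sub_add_cancel (show (D w).length ≤ m by omega),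
        Function.iterate_add_apply, ih _ (by omega) (D w) rfl, iterate_D_nil]

lemma height_le_iff {w : List ℕ} {n : ℕ} : height w ≤ n ↔ D^[n] w = [] := by
  refine ⟨fun h => ?_, fun h => Nat.sInf_le h⟩
  have hmem : D^[height w] w = [] :=
    Nat.sInf_mem (s := {k | D^[k] w = []}) ⟨w.length, iterate_length_D w⟩
  rw [← Nat.sub_add_cancel h, Function.iterate_add_apply, hmem, iterate_D_nil]

lemma iterate_height (w : List ℕ) : D^[height w] w = [] :=
  height_le_iff.mp le_rfl

lemma height_eq_zero_iff {w : List ℕ} : height w = 0 ↔ w = [] := by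
  rw [← Nat.le_zero, height_le_iff, Function.iterate_zero_apply]

lemma height_pos_iff {w : List ℕ} : 0 < height w ↔ w ≠ [] := by
  rw [Nat.pos_iff_ne_zero, Ne, height_eq_zero_iff]

lemma height_D (w : List ℕ) : height (D w) = height w - 1 := by
  refine le_antisymm (height_le_iff.mpr ?_) (Nat.sub_le_of_le_add (height_le_iff.mpr ?_))
  · rcases eq_or_ne w [] with rfl | hw
    · exact iterate_D_nil _
    · rw [← Function.iterate_succ_apply, Nat.succ_eq_add_one,
        Nat.sub_add_cancel (height_pos_iff.mpr hw), iterate_height]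
  · rw [Function.iterate_succ_apply, iterate_height]

lemma root_D {w : List ℕ} (h : 2 ≤ height w) : root (D w) = root w := by
  rw [root, root, height_D, ← Function.iterate_succ_apply]
  congr 1
  omega

lemma Cinf.derivative {w : List ℕ} (h : Cinf w) : Cinf (D w) :=
  fun k => by simpa only [← Function.iterate_succ_apply] using h (k + 1)

lemma Cinf.isWord {w : List ℕ} (h : Cinf w) : IsWord w := h 0

lemma Cinf.mem_rle {w : List ℕ} (h : Cinf w) : ∀ x ∈ rle w, x = 1 ∨ x = 2 := by
  obtain ⟨dL, dR, hrle, hdL, hdR, -⟩ := exists_rle_eq_append_D_append w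
  intro x hx
  rw [hrle] at hx
  simp only [List.mem_append] at hx
  rcases hx with (hx | hx) | hx
  · rcases hdL with rfl | rfl <;> simp_all
  · exact h.derivative.isWord x hx
  · rcases hdR with rfl | rfl <;> simp_all

lemma Cinf.not_infix_replicate_three {w : List ℕ} (h : Cinf w) (a : ℕ) :
    ¬ List.replicate 3 a <:+: w := fun hinf => by
  obtain ⟨c, hc, h3⟩ := exists_le_mem_rle_of_infix (by norm_num) hinf
  rcases h.mem_rle c hc with rfl | rfl <;> omega

/- A primitive `p` of a nonempty `u` has `rle p = dL ++ u ++ dR` with `dL, dR ∈ {[], [1]}`;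
the padding `[1]` is forced exactly when `u` begins (ends) with `1`, which `D` would
otherwise strip. -/
def padL (u : List ℕ) : List ℕ := if u.head? = some 1 then [1] else []

def padR (u : List ℕ) : List ℕ := if u.getLast? = some 1 then [1] else []

lemma padL_eq (u : List ℕ) : padL u = [] ∧ u.head? ≠ some 1 ∨ padL u = [1] ∧ u.head? = some 1 := by
  unfold padL; split <;> simp_all

lemma padR_eq (u : List ℕ) :
    padR u = [] ∧ u.getLast? ≠ some 1 ∨ padR u = [1] ∧ u.getLast? = some 1 := by
  unfold padR; split <;> simp_all

lemma eq_of_length_eq_of_pad {d e : List ℕ} (hd : d = [] ∨ d = [1]) (he : e = [] ∨ e = [1])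
    (h : d.length = e.length) : d = e := by
  rcases hd with rfl | rfl <;> rcases he with rfl | rfl <;> simp_all

lemma padL_eq_nil_or (u : List ℕ) : padL u = [] ∨ padL u = [1] :=
  (padL_eq u).imp And.left And.left

lemma padR_eq_nil_or (u : List ℕ) : padR u = [] ∨ padR u = [1] :=
  (padR_eq u).imp And.left And.left

lemma pos_of_mem_pad {u : List ℕ} (hu : IsWord u) : ∀ c ∈ padL u ++ u ++ padR u, 0 < c := by
  intro c hc
  simp only [List.mem_append] at hc
  rcases hc with (hc | hc) | hc
  · rcases padL_eq u with ⟨h, -⟩ | ⟨h, -⟩ <;> simp_all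
  · rcases hu c hc with rfl | rfl <;> norm_num
  · rcases padR_eq u with ⟨h, -⟩ | ⟨h, -⟩ <;> simp_all

lemma sum_pad (u : List ℕ) :
    (padL u ++ u ++ padR u).sum = u.sum + (padL u).length + (padR u).length := by
  simp only [List.sum_append, sum_eq_length_of_pad (padL_eq_nil_or u),
    sum_eq_length_of_pad (padR_eq_nil_or u)]
  omega

lemma exists_rle_eq_of_D_eq {p u : List ℕ} (hD : D p = u) :
    ∃ dL dR, rle p = dL ++ u ++ dR ∧ (dL = [] ∨ dL = [1]) ∧ (dR = [] ∨ dR = [1]) ∧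
      (padL u).length ≤ dL.length ∧ (padR u).length ≤ dR.length := by
  obtain ⟨dL, dR, hrle, hdL, hdR, hL, hR⟩ := exists_rle_eq_append_D_append p
  subst hD
  refine ⟨dL, dR, hrle, hdL, hdR, ?_, ?_⟩
  · rcases padL_eq (D p) with ⟨h, -⟩ | ⟨h, h1⟩
    · simp [h]
    · rcases hdL with rfl | rfl
      · exact absurd h1 (hL rfl)
      · simp [h]
  · rcases padR_eq (D p) with ⟨h, -⟩ | ⟨h, h1⟩
    · simp [h]
    · rcases hdR with rfl | rfl
      · exact absurd h1 (hR rfl)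
      · simp [h]

lemma sum_pad_le_length_of_D_eq {p u : List ℕ} (hD : D p = u) :
    (padL u ++ u ++ padR u).sum ≤ p.length := by
  obtain ⟨dL, dR, hrle, hdL, hdR, hL, hR⟩ := exists_rle_eq_of_D_eq hD
  rw [sum_pad, length_eq_of_rle_eq hrle hdL hdR]
  omega

lemma rle_eq_pad_of_D_eq {p u : List ℕ} (hD : D p = u)
    (hp : p.length ≤ (padL u ++ u ++ padR u).sum) : rle p = padL u ++ u ++ padR u := by
  obtain ⟨dL, dR, hrle, hdL, hdR, hL, hR⟩ := exists_rle_eq_of_D_eq hD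
  rw [sum_pad, length_eq_of_rle_eq hrle hdL hdR] at hp
  rw [hrle, eq_of_length_eq_of_pad hdL (padL_eq_nil_or u) (by omega),
    eq_of_length_eq_of_pad hdR (padR_eq_nil_or u) (by omega)]

lemma trim1_of_head?_ne {l : List ℕ} (h : l.head? ≠ some 1) : trim1 l = l := by
  rcases l with _ | ⟨x, l⟩
  · rfl
  · rw [trim1.eq_def]
    split
    · simp_all
    · rfl

lemma D_of_rle_eq_pad {p u : List ℕ} (hu : u ≠ []) (hp : rle p = padL u ++ u ++ padR u) :
    D p = u := by
  have hR : (trim1 (rle p).reverse).reverse = padL u ++ u := by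
    rw [hp]
    rcases padR_eq u with ⟨h, h1⟩ | ⟨h, -⟩
    · rw [h, List.append_nil, trim1_of_head?_ne, List.reverse_reverse]
      rwa [List.head?_reverse, List.getLast?_append_of_ne_nil _ hu]
    · simp [h, trim1]
  rw [D, hR]
  rcases padL_eq u with ⟨h, h1⟩ | ⟨h, -⟩
  · rw [h, List.nil_append, trim1_of_head?_ne h1]
  · rw [h]
    rfl

lemma D_decode_pad {u : List ℕ} (hu : u ≠ []) (huw : IsWord u) (b : ℕ) :
    D (decode b (padL u ++ u ++ padR u)) = u :=
  D_of_rle_eq_pad hu (rle_decode b (pos_of_mem_pad huw))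

lemma height_eq_height_D_add_one {v : List ℕ} (hv : D v ≠ []) : height v = height (D v) + 1 := by
  have hv' : v ≠ [] := fun h => hv (h ▸ D_nil)
  have := height_pos_iff.mpr hv'
  rw [height_D]
  omega

lemma Minimal.rle_eq {v : List ℕ} (hv : Minimal v) (h2 : 2 ≤ height v) :
    rle v = padL (D v) ++ D v ++ padR (D v) := by
  obtain ⟨hcinf, -, hmin⟩ := hv
  have hu : D v ≠ [] := by rw [← height_pos_iff, height_D]; omega
  refine rle_eq_pad_of_D_eq rfl ?_
  have hprim : Primitive (decode 1 (padL (D v) ++ D v ++ padR (D v))) (D^[0 + 1] v) :=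
    ⟨isWord_decode (Or.inl rfl) _, D_decode_pad hu hcinf.derivative.isWord 1⟩
  simpa using hmin 0 h2 _ hprim

lemma SRMin.derivative {v : List ℕ} (h : SRMin v) (h2 : 2 ≤ height v) : SRMin (D v) := by
  obtain ⟨⟨hcinf, -, hmin⟩, hroot⟩ := h
  refine ⟨⟨hcinf.derivative, by rw [height_D]; omega, fun j hj p hp => ?_⟩, by rwa [root_D h2]⟩
  rw [height_D] at hj
  rw [← Function.iterate_succ_apply] at hp ⊢
  exact hmin (j + 1) (by omega) p hp

lemma SRMin.decode_pad {u : List ℕ} (hu : SRMin u) {b : ℕ} (hb : b = 1 ∨ b = 2) :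
    SRMin (decode b (padL u ++ u ++ padR u)) ∧
      height (decode b (padL u ++ u ++ padR u)) = height u + 1 := by
  obtain ⟨⟨hcinf, hpos, hmin⟩, hroot⟩ := hu
  have hune : u ≠ [] := height_pos_iff.mp hpos
  set v := decode b (padL u ++ u ++ padR u)
  have hDv : D v = u := D_decode_pad hune hcinf.isWord b
  have hhv : height v = height u + 1 := hDv ▸ height_eq_height_D_add_one (hDv ▸ hune)
  have hcinfv : Cinf v := by
    rintro (_ | k)
    · exact isWord_decode hb _
    · rw [Function.iterate_succ_apply, hDv]
      exact hcinf k
  refine ⟨⟨⟨hcinfv, by omega, ?_⟩, ?_⟩, hhv⟩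
  · rintro (_ | j) hj p hp
    · rw [Function.iterate_one, hDv] at hp
      simpa only [v, Function.iterate_zero_apply, length_decode] using
        sum_pad_le_length_of_D_eq hp.2
    · rw [Function.iterate_succ_apply, hDv] at hp ⊢
      exact hmin j (by omega) p hp
  · rw [← root_D (by omega), hDv, hroot]

lemma decode_append_append (a : ℕ) (r u q : List ℕ) :
    decode a (r ++ u ++ q) = decode a r ++ decode ((3 - ·)^[r.length] a) u ++
      decode ((3 - ·)^[u.length] ((3 - ·)^[r.length] a)) q := by
  rw [decode_append, decode_append, List.length_append, add_comm, Function.iterate_add_apply]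

lemma decode_append_singleton (a : ℕ) (r : List ℕ) (c : ℕ) :
    decode a (r ++ [c]) = decode a r ++ List.replicate c ((3 - ·)^[r.length] a) := by
  simp [decode_append]

lemma exists_decode_eq_append_decode_padL {a : ℕ} (ha : a = 1 ∨ a = 2) {x : List ℕ}
    (hx : ∀ c ∈ x, 0 < c) (u : List ℕ) (hxu : padL u = [1] → x ≠ []) :
    ∃ X c, (c = 1 ∨ c = 2) ∧ decode a x = X ++ decode c (padL u) ∧
      (3 - ·)^[(padL u).length] c = (3 - ·)^[x.length] a := by
  rcases padL_eq u with ⟨h, -⟩ | ⟨h, -⟩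
  · refine ⟨decode a x, (3 - ·)^[x.length] a, ?_, by simp [h], by simp [h]⟩
    exact isWord_decode ha (x ++ [1]) _ (by simp [decode_append])
  · obtain ⟨X, e, hXe, he⟩ := exists_decode_eq_append_singleton a (hxu h) hx
    refine ⟨X, e, isWord_decode ha x e (by simp [hXe]), by simp [h, hXe], by simp [h, he]⟩

lemma exists_decode_eq_decode_padR_append (a : ℕ) {z : List ℕ} (hz : ∀ c ∈ z, 0 < c)
    (u : List ℕ) (hzu : padR u = [1] → z ≠ []) : ∃ Z, decode a z = decode a (padR u) ++ Z := by
  rcases padR_eq u with ⟨h, -⟩ | ⟨h, -⟩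
  · exact ⟨decode a z, by simp [h]⟩
  · obtain ⟨c, z, rfl⟩ := List.exists_cons_of_ne_nil (hzu h)
    obtain ⟨k, hk⟩ := Nat.exists_eq_add_one.mpr (hz c List.mem_cons_self)
    exact ⟨List.replicate k a ++ decode (3 - a) z, by simp [h, hk, List.replicate_succ]⟩

lemma exists_decode_pad_infix {a : ℕ} (ha : a = 1 ∨ a = 2) {x u z : List ℕ}
    (hx : ∀ c ∈ x, 0 < c) (hz : ∀ c ∈ z, 0 < c)
    (hxu : padL u = [1] → x ≠ []) (hzu : padR u = [1] → z ≠ []) :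
    ∃ c, (c = 1 ∨ c = 2) ∧ decode c (padL u ++ u ++ padR u) <:+: decode a (x ++ u ++ z) := by
  obtain ⟨X, c, hc, hX, hcm⟩ := exists_decode_eq_append_decode_padL ha hx u hxu
  obtain ⟨Z, hZ⟩ := exists_decode_eq_decode_padR_append
    ((3 - ·)^[u.length] ((3 - ·)^[x.length] a)) hz u hzu
  refine ⟨c, hc, X, Z, ?_⟩
  rw [decode_append_append, decode_append_append, hX, hZ, hcm]
  simp

lemma exists_eq_two_cons_of_padL_eq_nil {u : List ℕ} (hu : IsWord u) (hune : u ≠ [])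
    (h : padL u = []) : ∃ u', u = 2 :: u' := by
  obtain ⟨c, u', rfl⟩ := List.exists_cons_of_ne_nil hune
  rcases padL_eq (c :: u') with ⟨-, h1⟩ | ⟨h1, -⟩
  · rcases hu c List.mem_cons_self with rfl | rfl
    · simp at h1
    · exact ⟨u', rfl⟩
  · simp [h1] at h

lemma exists_eq_append_two_of_padR_eq_nil {u : List ℕ} (hu : IsWord u) (hune : u ≠ [])
    (h : padR u = []) : ∃ u', u = u' ++ [2] := by
  obtain ⟨u', c, rfl⟩ := (List.eq_nil_or_concat u).resolve_left hune
  rcases padR_eq (u' ++ [c]) with ⟨-, h1⟩ | ⟨h1, -⟩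
  · rcases hu c (by simp) with rfl | rfl
    · simp at h1
    · exact ⟨u', by simp⟩
  · simp [h1] at h

lemma Cinf.getLast?_ne_of_eq_decode_two_cons {w : List ℕ} (hw : Cinf w) {p q u : List ℕ} {m : ℕ}
    (h : w = p ++ decode m (2 :: u) ++ q) : p.getLast? ≠ some m := fun hp => by
  obtain ⟨p', rfl⟩ := List.getLast?_eq_some_iff.mp hp
  exact hw.not_infix_replicate_three m ⟨p', decode (3 - m) u ++ q, by simp [h]⟩

lemma Cinf.getLast?_ne_of_eq_decode_append_two {w : List ℕ} (hw : Cinf w) {p q u : List ℕ}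
    {m : ℕ} (h : w = p ++ decode m (u ++ [2]) ++ q) :
    (decode m (u ++ [2])).getLast? ≠ q.head? := fun hq => by
  set e := (3 - ·)^[u.length] m
  rw [decode_append_singleton] at hq h
  obtain ⟨q', rfl⟩ : ∃ q', q = e :: q' := by
    rw [← List.head?_eq_some_iff, ← hq]
    simp [e, List.replicate_succ]
  exact hw.not_infix_replicate_three e ⟨p ++ decode m u, q', by simp [h, e, List.replicate_succ]⟩

lemma exists_rle_eq_of_decode_pad_infix {w : List ℕ} (hw : Cinf w) {u : List ℕ} (hu : IsWord u)
    (hune : u ≠ []) {s t : List ℕ} (b : ℕ) (hocc : w = s ++ decode b (padL u ++ u ++ padR u) ++ t) :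
    ∃ x z, rle w = x ++ u ++ z ∧ x.sum = s.length + (padL u).length ∧ (padR u = [1] → z ≠ []) := by
  have hupos : ∀ c ∈ u, 0 < c := fun c hc => by rcases hu c hc with rfl | rfl <;> norm_num
  set m := (3 - ·)^[(padL u).length] b
  set p := s ++ decode b (padL u)
  set q := decode ((3 - ·)^[u.length] m) (padR u) ++ t
  have hw' : w = p ++ decode m u ++ q := by
    rw [hocc, decode_append_append]
    simp [p, q, m]
  have hy : (decode m u).head? = some m := head?_decode m hune hupos
  -- Runs of a C∞-word have length at most two, so the runs spelling `u` cannot be extended.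
  have hleft : p.getLast? ≠ (decode m u).head? := by
    rw [hy]
    rcases padL_eq u with ⟨h, -⟩ | ⟨h, -⟩
    · obtain ⟨u', rfl⟩ := exists_eq_two_cons_of_padL_eq_nil hu hune h
      exact hw.getLast?_ne_of_eq_decode_two_cons hw'
    · have hb : p.getLast? = some b := by simp [p, h]
      rw [hb, Ne, Option.some_inj]
      simp only [m, h, List.length_singleton, Function.iterate_one]
      omega
  have hright : (decode m u).getLast? ≠ q.head? := by
    rcases padR_eq u with ⟨h, -⟩ | ⟨h, -⟩
    · obtain ⟨u', rfl⟩ := exists_eq_append_two_of_padR_eq_nil hu hune h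
      exact hw.getLast?_ne_of_eq_decode_append_two hw'
    · obtain ⟨Y, e, hYe, he⟩ := exists_decode_eq_append_singleton m hune hupos
      have hq : q.head? = some (3 - e) := by simp [q, h, he]
      rw [hYe, List.getLast?_concat, hq, Ne, Option.some_inj]
      omega
  refine ⟨rle p, rle q, ?_, ?_, ?_⟩
  · rw [hw', rle_append_append (fun h => by simp [h] at hy) hleft hright, rle_decode m hupos]
  · rw [sum_rle]
    simp [p, sum_eq_length_of_pad (padL_eq_nil_or u)]
  · intro h hq
    have hlen := sum_rle q
    rw [hq] at hlen
    simp [q, h] at hlen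

def minFactors (w : List ℕ) : Set (List ℕ) := {u | u <:+: w ∧ SRMin u ∧ height u = height w}

def OccursOnce (v w : List ℕ) : Prop :=
  ∀ s₁ t₁ s₂ t₂, w = s₁ ++ v ++ t₁ → w = s₂ ++ v ++ t₂ → s₁ = s₂

lemma height_pos_of_mem_minFactors {w v : List ℕ} (hv : v ∈ minFactors w) : 0 < height w :=
  hv.2.2 ▸ hv.2.1.1.2.1

lemma exists_eq_append_of_append_eq {α : Type*} {dL M dR x u z : List α}
    (h : dL ++ M ++ dR = x ++ u ++ z) (hL : dL.length ≤ x.length) (hR : dR.length ≤ z.length) :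
    ∃ s t, x = dL ++ s ∧ M = s ++ u ++ t := by
  obtain ⟨s, rfl⟩ := List.prefix_of_prefix_length_le ⟨M ++ dR, (List.append_assoc _ _ _).symm⟩
    ⟨u ++ z, by rw [h, List.append_assoc]⟩ hL
  have h' : M ++ dR = s ++ u ++ z := by simpa using h
  obtain ⟨t, rfl⟩ := List.suffix_of_suffix_length_le ⟨M, rfl⟩ ⟨s ++ u, h'.symm⟩ hR
  exact ⟨s, t, rfl, List.append_cancel_right (by simpa using h')⟩

lemma length_eq_of_mem_minFactors {w v : List ℕ} (h2 : 2 ≤ height w) (hv : v ∈ minFactors w) :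
    v.length = (padL (D v) ++ D v ++ padR (D v)).sum := by
  rw [← sum_rle, hv.2.1.1.rle_eq (by rw [hv.2.2]; exact h2)]

lemma exists_D_infix_of_mem_minFactors {w : List ℕ} (hw : Cinf w) (h2 : 2 ≤ height w)
    {dL dR : List ℕ} (hrle : rle w = dL ++ D w ++ dR) (hdL : dL = [] ∨ dL = [1])
    (hdR : dR = [] ∨ dR = [1]) {s v t : List ℕ} (hocc : w = s ++ v ++ t) (hv : v ∈ minFactors w) :
    ∃ s'' t'', D w = s'' ++ D v ++ t'' ∧ (dL ++ s'').sum = s.length + (padL (D v)).length := by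
  obtain ⟨-, hSR, hh⟩ := hv
  have hune : D v ≠ [] := by rw [← height_pos_iff, height_D]; omega
  obtain ⟨b, hb⟩ := Option.ne_none_iff_exists'.mp
    (mt List.head?_eq_none_iff.mp (fun h => hune (h ▸ D_nil)))
  have hdec := decode_rle hSR.1.1.isWord hb
  rw [hSR.1.rle_eq (by omega)] at hdec
  rw [← hdec] at hocc
  obtain ⟨x, z, hxz, hsum, hz⟩ :=
    exists_rle_eq_of_decode_pad_infix hw hSR.1.1.derivative.isWord hune b hocc
  have hL : dL.length ≤ x.length := by
    rcases hdL with rfl | rfl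
    · exact Nat.zero_le _
    rcases x with _ | ⟨c, x⟩
    · obtain ⟨c, u', hu'⟩ := List.exists_cons_of_ne_nil hune
      rw [hrle, hu'] at hxz
      simp only [List.cons_append, List.nil_append, List.cons.injEq] at hxz
      rcases padL_eq (D v) with ⟨-, h⟩ | ⟨h, -⟩
      · simp [hu', ← hxz.1] at h
      · simp [h] at hsum
    · simp
  have hR : dR.length ≤ z.length := by
    rcases hdR with rfl | rfl
    · exact Nat.zero_le _
    rcases z.eq_nil_or_concat with rfl | ⟨z, c, rfl⟩
    · have hlast := congrArg List.getLast? hxz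
      rw [hrle] at hlast
      simp only [List.append_nil, List.getLast?_append_of_ne_nil _ hune] at hlast
      rcases padR_eq (D v) with ⟨-, h⟩ | ⟨h, -⟩
      · simp [← hlast] at h
      · exact absurd rfl (hz h)
    · simp
  obtain ⟨s'', t'', rfl, hM⟩ := exists_eq_append_of_append_eq (hrle ▸ hxz) hL hR
  exact ⟨s'', t'', hM, hsum⟩

lemma D_mem_minFactors {w v : List ℕ} (hw : Cinf w) (h2 : 2 ≤ height w) (hv : v ∈ minFactors w) :
    D v ∈ minFactors (D w) := by
  obtain ⟨dL, dR, hrle, hdL, hdR, -⟩ := exists_rle_eq_append_D_append w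
  obtain ⟨s, t, hocc⟩ := hv.1
  obtain ⟨s'', t'', hDw, -⟩ :=
    exists_D_infix_of_mem_minFactors hw h2 hrle hdL hdR hocc.symm hv
  exact ⟨⟨s'', t'', hDw.symm⟩, hv.2.1.derivative (by rw [hv.2.2]; exact h2),
    by rw [height_D, height_D, hv.2.2]⟩

lemma eq_of_D_eq_of_mem_minFactors {w : List ℕ} (hw : Cinf w) (h2 : 2 ≤ height w)
    {s₁ v₁ t₁ s₂ v₂ t₂ : List ℕ} (h₁ : w = s₁ ++ v₁ ++ t₁) (h₂ : w = s₂ ++ v₂ ++ t₂)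
    (hv₁ : v₁ ∈ minFactors w) (hv₂ : v₂ ∈ minFactors w) (hD : D v₁ = D v₂)
    (hD₁ : OccursOnce (D v₁) (D w)) : s₁ = s₂ ∧ v₁ = v₂ := by
  obtain ⟨dL, dR, hrle, hdL, hdR, -⟩ := exists_rle_eq_append_D_append w
  obtain ⟨s₁', t₁', hDw₁, hpos₁⟩ := exists_D_infix_of_mem_minFactors hw h2 hrle hdL hdR h₁ hv₁
  obtain ⟨s₂', t₂', hDw₂, hpos₂⟩ := exists_D_infix_of_mem_minFactors hw h2 hrle hdL hdR h₂ hv₂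
  rw [← hD] at hDw₂ hpos₂
  obtain rfl := hD₁ _ _ _ _ hDw₁ hDw₂
  have hlen₁ := length_eq_of_mem_minFactors h2 hv₁
  have hlen₂ := length_eq_of_mem_minFactors h2 hv₂
  rw [← hD] at hlen₂
  have h : s₁ ++ (v₁ ++ t₁) = s₂ ++ (v₂ ++ t₂) := by
    simpa only [List.append_assoc] using h₁.symm.trans h₂
  obtain ⟨rfl, hvt⟩ := List.append_inj h (by omega)
  exact ⟨rfl, (List.append_inj hvt (by omega)).1⟩

lemma exists_mem_minFactors_D_eq {w u : List ℕ} (hw : Cinf w) (h2 : 2 ≤ height w)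
    (hu : u ∈ minFactors (D w)) : ∃ v ∈ minFactors w, D v = u := by
  obtain ⟨⟨s'', t'', hocc⟩, hSR, hh⟩ := hu
  obtain ⟨dL, dR, hrle, hdL, hdR, hL, hR⟩ := exists_rle_eq_append_D_append w
  have hune : u ≠ [] := height_pos_iff.mp hSR.1.2.1
  have hwne : w ≠ [] := height_pos_iff.mp (by omega)
  obtain ⟨a, ha⟩ := Option.ne_none_iff_exists'.mp (mt List.head?_eq_none_iff.mp hwne)
  have hrle' : rle w = (dL ++ s'') ++ u ++ (t'' ++ dR) := by rw [hrle, ← hocc]; simp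
  have hxu : padL u = [1] → dL ++ s'' ≠ [] := by
    intro h hx
    rw [List.append_eq_nil_iff] at hx
    rcases padL_eq u with ⟨h', -⟩ | ⟨-, h'⟩
    · simp [h] at h'
    · exact hL hx.1
        (by rw [← hocc, hx.2, List.nil_append, List.head?_append_of_ne_nil _ hune, h'])
  have hzu : padR u = [1] → t'' ++ dR ≠ [] := by
    intro h hz
    rw [List.append_eq_nil_iff] at hz
    rcases padR_eq u with ⟨h', -⟩ | ⟨-, h'⟩
    · simp [h] at h'
    · exact hR hz.2
        (by rw [← hocc, hz.1, List.append_nil, List.getLast?_append_of_ne_nil _ hune, h'])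
  obtain ⟨c, hc, hinf⟩ := exists_decode_pad_infix (hw.isWord a (List.mem_of_head? ha))
    (fun x hx => pos_of_mem_rle x (hrle' ▸ List.mem_append_left _ (List.mem_append_left _ hx)))
    (fun x hx => pos_of_mem_rle x (hrle' ▸ List.mem_append_right _ hx)) hxu hzu
  obtain ⟨hSRv, hhv⟩ := hSR.decode_pad hc
  refine ⟨_, ⟨?_, hSRv, ?_⟩, D_decode_pad hune hSR.1.1.isWord c⟩
  · rwa [← hrle', decode_rle hw.isWord ha] at hinf
  · rw [hhv, hh, height_D]
    omega

lemma D_singleton (a : ℕ) : D [a] = [] := rfl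

lemma height_singleton (a : ℕ) : height [a] = 1 :=
  le_antisymm (height_le_iff.mpr (D_singleton a)) (height_pos_iff.mpr (List.cons_ne_nil a []))

lemma root_of_height_eq_one {w : List ℕ} (h : height w = 1) : root w = w := by
  simp [root, h]

lemma srMin_singleton {a : ℕ} (ha : a = 1 ∨ a = 2) : SRMin [a] := by
  refine ⟨⟨?_, by rw [height_singleton]; omega, ?_⟩,
    by rw [root_of_height_eq_one (height_singleton a)]; rfl⟩
  · rintro (_ | k)
    · simpa [IsWord] using ha
    · simp [Function.iterate_succ_apply, D_singleton, iterate_D_nil, IsWord]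
  · intro j hj
    rw [height_singleton] at hj
    omega

lemma nodup_of_D_eq_nil {w : List ℕ} (h : D w = []) : w.Nodup := by
  obtain ⟨dL, dR, hrle, hdL, hdR, -⟩ := exists_rle_eq_append_D_append w
  rw [h, List.append_nil] at hrle
  have hlen := sum_rle w
  match w, hrle with
  | [], _ => exact List.nodup_nil
  | [a], _ => exact List.nodup_singleton a
  | [a, b], hrle =>
    by_cases hab : a = b
    · subst hab
      rcases hdL with rfl | rfl <;> rcases hdR with rfl | rfl <;> simp [rle] at hrle
    · simp [hab]
  | _ :: _ :: _ :: _, hrle =>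
    rw [hrle] at hlen
    rcases hdL with rfl | rfl <;> rcases hdR with rfl | rfl <;> simp at hlen

lemma nodup_of_height_eq_one {w : List ℕ} (h : height w = 1) : w.Nodup :=
  nodup_of_D_eq_nil (by simpa [h] using iterate_height w)

lemma mem_minFactors_iff_of_height_eq_one {w v : List ℕ} (hw : Cinf w) (h1 : height w = 1) :
    v ∈ minFactors w ↔ ∃ a ∈ w, v = [a] := by
  constructor
  · rintro ⟨hinf, hSR, hh⟩
    obtain ⟨a, rfl⟩ := List.length_eq_one_iff.mp (root_of_height_eq_one (hh.trans h1) ▸ hSR.2)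
    exact ⟨a, (List.singleton_infix_iff a w).mp hinf, rfl⟩
  · rintro ⟨a, ha, rfl⟩
    exact ⟨(List.singleton_infix_iff a w).mpr ha, srMin_singleton (hw.isWord a ha),
      by rw [height_singleton, h1]⟩

lemma occursOnce_singleton_of_nodup {w : List ℕ} (hw : w.Nodup) (a : ℕ) : OccursOnce [a] w := by
  intro s₁ t₁ s₂ t₂ h₁ h₂
  have hnd := h₁ ▸ hw
  simp only [List.append_assoc, List.singleton_append, List.nodup_append, List.nodup_cons,
    List.mem_cons] at hnd
  have heq : s₁ ++ a :: t₁ = s₂ ++ a :: t₂ := by simpa using h₁.symm.trans h₂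
  exact ((List.append_cons_inj_of_notMem (fun ha => hnd.2.2 a ha a (Or.inl rfl) rfl)
    hnd.2.1.1).mp heq).1

theorem occursOnce_of_mem_minFactors {w v : List ℕ} (hw : Cinf w) (hv : v ∈ minFactors w) :
    OccursOnce v w := by
  induction h : height w using Nat.strong_induction_on generalizing w v with
  | _ n ih =>
  rcases lt_or_ge (height w) 2 with h2 | h2
  · have h1 : height w = 1 := by have := height_pos_of_mem_minFactors hv; omega
    obtain ⟨a, -, rfl⟩ := (mem_minFactors_iff_of_height_eq_one hw h1).mp hv
    exact occursOnce_singleton_of_nodup (nodup_of_height_eq_one h1) a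
  · intro s₁ t₁ s₂ t₂ h₁ h₂
    exact (eq_of_D_eq_of_mem_minFactors hw h2 h₁ h₂ hv hv rfl
      (ih _ (by rw [← h, height_D]; omega) hw.derivative (D_mem_minFactors hw h2 hv) rfl)).1

lemma image_D_minFactors {w : List ℕ} (hw : Cinf w) (h2 : 2 ≤ height w) :
    D '' minFactors w = minFactors (D w) := by
  ext u
  refine ⟨?_, exists_mem_minFactors_D_eq hw h2⟩
  rintro ⟨v, hv, rfl⟩
  exact D_mem_minFactors hw h2 hv

lemma injOn_D_minFactors {w : List ℕ} (hw : Cinf w) (h2 : 2 ≤ height w) :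
    Set.InjOn D (minFactors w) := by
  intro v₁ hv₁ v₂ hv₂ hD
  obtain ⟨s₁, t₁, h₁⟩ := hv₁.1
  obtain ⟨s₂, t₂, h₂⟩ := hv₂.1
  exact (eq_of_D_eq_of_mem_minFactors hw h2 h₁.symm h₂.symm hv₁ hv₂ hD
    (occursOnce_of_mem_minFactors hw.derivative (D_mem_minFactors hw h2 hv₁))).2

lemma ncard_minFactors_of_height_eq_one {w : List ℕ} (hw : Cinf w) (h1 : height w = 1) :
    (minFactors w).ncard = (root w).length := by
  have hset : minFactors w = (fun a => [a]) '' (w.toFinset : Set ℕ) := by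
    ext v
    simp [mem_minFactors_iff_of_height_eq_one hw h1, eq_comm]
  rw [hset, Set.ncard_image_of_injective _ List.singleton_injective, Set.ncard_coe_finset,
    List.toFinset_card_of_nodup (nodup_of_height_eq_one h1),
    root_of_height_eq_one h1]

theorem ncard_minFactors {w : List ℕ} (hw : Cinf w) : (minFactors w).ncard = (root w).length := by
  induction h : height w using Nat.strong_induction_on generalizing w with
  | _ n ih =>
  rcases lt_or_ge n 2 with hn | hn
  · interval_cases n
    · have hempty : minFactors w = ∅ :=
        Set.eq_empty_of_forall_notMem fun v hv => (height_pos_of_mem_minFactors hv).ne' h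
      rw [hempty, Set.ncard_empty, root, h, height_eq_zero_iff.mp h]
      rfl
    · exact ncard_minFactors_of_height_eq_one hw h
  · rw [← (injOn_D_minFactors hw (h ▸ hn)).ncard_image, image_D_minFactors hw (h ▸ hn),
      ← root_D (h ▸ hn)]
    exact ih (n - 1) (by omega) hw.derivative (by rw [height_D, h])

theorem minimal_factors_count_general (w : List ℕ) (hw : Cinf w) :
    ((root w).length = 1 →
      {u | u <:+: w ∧ SRMin u ∧ height u = height w}.ncard = 1) ∧
    ((root w).length = 2 →
      {u | u <:+: w ∧ SRMin u ∧ height u = height w}.ncard = 2) :=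
  ⟨fun h => (ncard_minFactors hw).trans h, fun h => (ncard_minFactors hw).trans h⟩

/-- a single-rooted (resp. double-rooted) C∞-word of height k > 0 has
exactly one (resp. exactly two) factors that are single-rooted minimal words of
height k. -/
theorem minimal_factors_count (w : List ℕ) (hw : Cinf w) (hk : 0 < height w) :
    ((root w).length = 1 →
      {u | u <:+: w ∧ SRMin u ∧ height u = height w}.ncard = 1) ∧
    ((root w).length = 2 →
      {u | u <:+: w ∧ SRMin u ∧ height u = height w}.ncard = 2) :=
  minimal_factors_count_general w hw

end CInfWords
end
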